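/- Let α : ℝ → ℝ² be a regular C³ plane curve on an open interval I with signed curvature K(t) ≠ 0, let f : I → ℝ be of class C³, and define γ : I → ℝ³ by γ(t) = (α₁(t), α₂(t), f(t)); assume the curvature κ and torsion τ of γ are nonzero at t, and let c₁ = 1/κ and c₂ = −κ'/(‖γ'‖κ²τ) be the focal curvatures of γ, N and B its principal normal and binormal unit vectors. Then the focal curve C_γ(t) = γ(t) + c₁(t)N(t) + c₂(t)B(t) decomposes as C_γ(t) = ι(β(t)) + f̃(t)·e₃, where β(t) = α(t) + [ c₁·( (ṡ² + f'²)·α'' − ½(d/dt)(ṡ² + f'²)·α' ) − c₂·√(ṡ² + f'²)·J(f''·α' − f'·α'') ] / [ √(ṡ² + f'²)·√(ṡ⁶K² + ‖f''·α' − f'·α''‖²) ] and f̃(t) = f(t) + [ c₁·( f''·ṡ² − f'·(d/dt)(ṡ²/2) ) + c₂·√(ṡ² + f'²)·ṡ³K ] / [ √(ṡ² + f'²)·√(ṡ⁶K² + ‖f''·α' − f'·α''‖²) ], with ṡ(t) = ‖α'(t)‖, ι : ℝ² → ℝ³ the embedding ι(p₁,p₂) = (p₁,p₂,0), and e₃ =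 (0,0,1). -/

import Mathlib

/-!
Write `γ = ι ∘ α + f • e₃`. Then `γ' = ι α' + f' e₃`, `γ'' = ι α'' + f'' e₃`, and
`γ' × γ'' = ⟪α'', J α'⟫ e₃ - ι J(f'' α' - f' α'')` with `⟪α'', J α'⟫ = ṡ³ K`. By the BAC–CAB rule
`(γ' × γ'') × γ' = ‖γ'‖² γ'' - ⟪γ', γ''⟫ γ'`, so `c₁ N + c₂ B` is an explicit combination of
`γ'`, `γ''` and `γ' × γ''`, whose `ι`-component and `e₃`-component are the two formulas.
-/
open scoped RealInnerProductSpace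

noncomputable section

/-- The Euclidean plane `ℝ²`. -/
abbrev E2 := EuclideanSpace ℝ (Fin 2)
/-- Euclidean 3-space `ℝ³`. -/
abbrev E3 := EuclideanSpace ℝ (Fin 3)

/-- The point `(a, b)` of `ℝ²`. -/
def mk2 (a b : ℝ) : E2 := (WithLp.equiv 2 (Fin 2 → ℝ)).symm ![a, b]
/-- The point `(a, b, c)` of `ℝ³`. -/
def mk3 (a b c : ℝ) : E3 := (WithLp.equiv 2 (Fin 3 → ℝ)).symm ![a, b, c]

/-- The complex structure `J(p₁, p₂) = (-p₂, p₁)`, rotation by `π/2` counterclockwise. -/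
def Jc (v : E2) : E2 := mk2 (-(v 1)) (v 0)
/-- The embedding `ι : ℝ² → ℝ³`, `ι(p₁, p₂) = (p₁, p₂, 0)`. -/
def emb (v : E2) : E3 := mk3 (v 0) (v 1) 0
/-- The unit vector `e₃ = (0, 0, 1)`. -/
def e₃ : E3 := mk3 0 0 1
/-- The cross product in `ℝ³`. -/
def cross3 (u v : E3) : E3 :=
  mk3 (u 1 * v 2 - u 2 * v 1) (u 2 * v 0 - u 0 * v 2) (u 0 * v 1 - u 1 * v 0)

@[simp] lemma mk2_apply_zero (a b : ℝ) : mk2 a b 0 = a := rfl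
@[simp] lemma mk2_apply_one (a b : ℝ) : mk2 a b 1 = b := rfl
@[simp] lemma mk3_apply_zero (a b c : ℝ) : mk3 a b c 0 = a := rfl
@[simp] lemma mk3_apply_one (a b c : ℝ) : mk3 a b c 1 = b := rfl
@[simp] lemma mk3_apply_two (a b c : ℝ) : mk3 a b c 2 = c := rfl

lemma inner_E2_eq (x y : E2) : ⟪x, y⟫ = x 0 * y 0 + x 1 * y 1 := by
  simp [PiLp.inner_apply, Fin.sum_univ_two, mul_comm]

lemma inner_E3_eq (x y : E3) : ⟪x, y⟫ = x 0 * y 0 + x 1 * y 1 + x 2 * y 2 := by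
  simp [PiLp.inner_apply, Fin.sum_univ_three, mul_comm]

lemma norm_sq_E2_eq (x : E2) : ‖x‖ ^ 2 = x 0 ^ 2 + x 1 ^ 2 := by
  rw [← real_inner_self_eq_norm_sq, inner_E2_eq]; ring

lemma norm_sq_E3_eq (x : E3) : ‖x‖ ^ 2 = x 0 ^ 2 + x 1 ^ 2 + x 2 ^ 2 := by
  rw [← real_inner_self_eq_norm_sq, inner_E3_eq]; ring

def embL : E2 →L[ℝ] E3 :=
  LinearMap.toContinuousLinearMap
    { toFun := emb
      map_add' := fun x y => by ext i; fin_cases i <;> simp [emb]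
      map_smul' := fun r x => by ext i; fin_cases i <;> simp [emb] }

@[simp] lemma embL_apply (v : E2) : embL v = emb v := rfl

lemma mk3_eq_emb_add_smul_e₃ (v : E2) (c : ℝ) : mk3 (v 0) (v 1) c = emb v + c • e₃ := by
  ext i; fin_cases i <;> simp [emb, e₃]

lemma cross3_cross3_self (u v : E3) : cross3 (cross3 u v) u = ⟪u, u⟫ • v - ⟪u, v⟫ • u := by
  rw [inner_E3_eq, inner_E3_eq]
  ext i
  fin_cases i <;>
    simp only [cross3, PiLp.sub_apply, PiLp.smul_apply, smul_eq_mul, Fin.zero_eta, Fin.mk_one,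
      Fin.reduceFinMk, Fin.isValue, mk3_apply_zero, mk3_apply_one, mk3_apply_two] <;> ring

lemma cross3_smul_smul (r s : ℝ) (u v : E3) : cross3 (r • u) (s • v) = (r * s) • cross3 u v := by
  ext i
  fin_cases i <;>
    simp only [cross3, PiLp.smul_apply, smul_eq_mul, Fin.zero_eta, Fin.mk_one, Fin.reduceFinMk,
      Fin.isValue, mk3_apply_zero, mk3_apply_one, mk3_apply_two] <;> ring

@[simp] lemma cross3_zero_left (v : E3) : cross3 0 v = 0 := by
  ext i; fin_cases i <;> simp [cross3]

lemma smul_frenet_normal_add_smul_binormal (v w : E3) (c₁ c₂ : ℝ) :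
    c₁ • cross3 (‖cross3 v w‖⁻¹ • cross3 v w) (‖v‖⁻¹ • v) + c₂ • (‖cross3 v w‖⁻¹ • cross3 v w) =
      (‖v‖ * ‖cross3 v w‖)⁻¹ • (c₁ • (⟪v, v⟫ • w - ⟪v, w⟫ • v) + (c₂ * ‖v‖) • cross3 v w) := by
  rcases eq_or_ne v 0 with rfl | hv
  · simp
  rw [cross3_smul_smul, cross3_cross3_self]
  have : ‖v‖ ≠ 0 := norm_ne_zero_iff.mpr hv
  match_scalars <;> field_simp

lemma cross3_emb_add_smul_e₃ (a b : E2) (p q : ℝ) :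
    cross3 (emb a + p • e₃) (emb b + q • e₃) = emb (-Jc (q • a - p • b)) + ⟪b, Jc a⟫ • e₃ := by
  ext i
  fin_cases i <;>
    simp only [cross3, emb, e₃, Jc, inner_E2_eq, PiLp.add_apply, PiLp.sub_apply, PiLp.neg_apply,
      PiLp.smul_apply, smul_eq_mul, mk2_apply_zero, mk2_apply_one, Fin.zero_eta, Fin.mk_one,
      Fin.reduceFinMk, Fin.isValue, mk3_apply_zero, mk3_apply_one, mk3_apply_two] <;> ring

lemma inner_emb_add_smul_e₃ (a b : E2) (p q : ℝ) :
    ⟪emb a + p • e₃, emb b + q • e₃⟫ = ⟪a, b⟫ + p * q := by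
  simp [inner_E3_eq, inner_E2_eq, emb, e₃]

lemma norm_Jc (v : E2) : ‖Jc v‖ = ‖v‖ := by
  rw [← sq_eq_sq₀ (norm_nonneg _) (norm_nonneg _), norm_sq_E2_eq, norm_sq_E2_eq]
  simp only [Jc, mk2_apply_zero, mk2_apply_one]
  ring

lemma norm_emb_add_smul_e₃ (a : E2) (p : ℝ) : ‖emb a + p • e₃‖ = √(‖a‖ ^ 2 + p ^ 2) := by
  rw [← Real.sqrt_sq (norm_nonneg _), norm_sq_E3_eq, norm_sq_E2_eq]
  simp [emb, e₃]

lemma norm_cross3_emb_add_smul_e₃ (a b : E2) (p q : ℝ) :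
    ‖cross3 (emb a + p • e₃) (emb b + q • e₃)‖ = √(⟪b, Jc a⟫ ^ 2 + ‖q • a - p • b‖ ^ 2) := by
  rw [cross3_emb_add_smul_e₃, norm_emb_add_smul_e₃, norm_neg, norm_Jc, add_comm]

lemma ContDiffOn.differentiableAt_deriv {F : Type*} [NormedAddCommGroup F] [NormedSpace ℝ F]
    {g : ℝ → F} {s : Set ℝ} (hg : ContDiffOn ℝ 2 g s) (hs : IsOpen s) {u : ℝ} (hu : u ∈ s) :
    DifferentiableAt ℝ (deriv g) u :=
  ((hg.deriv_of_isOpen hs (m := 1) (by norm_num)).differentiableOn one_ne_zero).differentiableAt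
    (hs.mem_nhds hu)

section Cylinder

variable {α : ℝ → E2} {f : ℝ → ℝ}

lemma hasDerivAt_emb_add_smul_e₃ {a : E2} {p u : ℝ} (hα : HasDerivAt α a u)
    (hf : HasDerivAt f p u) :
    HasDerivAt (fun x => emb (α x) + f x • e₃) (emb a + p • e₃) u :=
  (embL.hasFDerivAt.comp_hasDerivAt u hα).add (hf.smul_const e₃)

lemma deriv_emb_add_smul_e₃ {u : ℝ} (hα : DifferentiableAt ℝ α u) (hf : DifferentiableAt ℝ f u) :
    deriv (fun x => emb (α x) + f x • e₃) u = emb (deriv α u) + deriv f u • e₃ :=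
  (hasDerivAt_emb_add_smul_e₃ hα.hasDerivAt hf.hasDerivAt).deriv

lemma deriv_deriv_emb_add_smul_e₃ {s : Set ℝ} (hs : IsOpen s) (hα : ContDiffOn ℝ 2 α s)
    (hf : ContDiffOn ℝ 2 f s) {u : ℝ} (hu : u ∈ s) :
    deriv (deriv fun x => emb (α x) + f x • e₃) u =
      emb (deriv (deriv α) u) + deriv (deriv f) u • e₃ := by
  have hderiv : deriv (fun x => emb (α x) + f x • e₃) =ᶠ[nhds u]
      fun x => emb (deriv α x) + deriv f x • e₃ := by
    filter_upwards [hs.mem_nhds hu] with x hx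
    exact deriv_emb_add_smul_e₃
      ((hα.differentiableOn two_ne_zero).differentiableAt (hs.mem_nhds hx))
      ((hf.differentiableOn two_ne_zero).differentiableAt (hs.mem_nhds hx))
  rw [hderiv.deriv_eq]
  exact deriv_emb_add_smul_e₃ (hα.differentiableAt_deriv hs hu) (hf.differentiableAt_deriv hs hu)

end Cylinder

theorem focal_curve_of_cylindrical_curve_general
    (I : Set ℝ) (hIopen : IsOpen I)
    (α : ℝ → E2) (f : ℝ → ℝ) (γ : ℝ → E3) (K : ℝ → ℝ)
    (hα : ContDiffOn ℝ 3 α I) (hreg : ∀ t ∈ I, deriv α t ≠ 0)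
    (hK : ∀ t ∈ I, K t = ⟪deriv (deriv α) t, Jc (deriv α t)⟫ / ‖deriv α t‖ ^ 3)
    (hf : ContDiffOn ℝ 3 f I)
    (hγ : ∀ t, γ t = mk3 (α t 0) (α t 1) (f t))
    (t : ℝ) (ht : t ∈ I)
    (T B N : E3) (c₁ c₂ : ℝ)
    (hT : T = ‖deriv γ t‖⁻¹ • deriv γ t)
    (hB : B = ‖cross3 (deriv γ t) (deriv (deriv γ) t)‖⁻¹ •
      cross3 (deriv γ t) (deriv (deriv γ) t))
    (hN : N = cross3 B T)
    (β : E2) (ftilde : ℝ)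
    (hβ : β = α t +
      (Real.sqrt (‖deriv α t‖ ^ 2 + deriv f t ^ 2) *
          Real.sqrt (‖deriv α t‖ ^ 6 * K t ^ 2 +
            ‖deriv (deriv f) t • deriv α t - deriv f t • deriv (deriv α) t‖ ^ 2))⁻¹ •
        (c₁ • ((‖deriv α t‖ ^ 2 + deriv f t ^ 2) • deriv (deriv α) t -
            (1 / 2 * deriv (fun u => ‖deriv α u‖ ^ 2 + deriv f u ^ 2) t) • deriv α t) -
          (c₂ * Real.sqrt (‖deriv α t‖ ^ 2 + deriv f t ^ 2)) •
            Jc (deriv (deriv f) t • deriv α t - deriv f t • deriv (deriv α) t)))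
    (hftilde : ftilde = f t +
      (c₁ * (deriv (deriv f) t * ‖deriv α t‖ ^ 2 -
          deriv f t * deriv (fun u => ‖deriv α u‖ ^ 2 / 2) t) +
        c₂ * Real.sqrt (‖deriv α t‖ ^ 2 + deriv f t ^ 2) * ‖deriv α t‖ ^ 3 * K t) /
      (Real.sqrt (‖deriv α t‖ ^ 2 + deriv f t ^ 2) *
        Real.sqrt (‖deriv α t‖ ^ 6 * K t ^ 2 +
          ‖deriv (deriv f) t • deriv α t - deriv f t • deriv (deriv α) t‖ ^ 2))) :
    γ t + c₁ • N + c₂ • B = emb β + ftilde • e₃ := by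
  obtain rfl : γ = fun x => emb (α x) + f x • e₃ :=
    funext fun x => (hγ x).trans (mk3_eq_emb_add_smul_e₃ _ _)
  have hα₂ : ContDiffOn ℝ 2 α I := hα.of_le (by norm_num)
  have hf₂ : ContDiffOn ℝ 2 f I := hf.of_le (by norm_num)
  have hα' : DifferentiableAt ℝ α t :=
    (hα₂.differentiableOn two_ne_zero).differentiableAt (hIopen.mem_nhds ht)
  have hf' : DifferentiableAt ℝ f t :=
    (hf₂.differentiableOn two_ne_zero).differentiableAt (hIopen.mem_nhds ht)
  have hα'' : HasDerivAt (deriv α) (deriv (deriv α) t) t :=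
    (hα₂.differentiableAt_deriv hIopen ht).hasDerivAt
  have hf'' : HasDerivAt (deriv f) (deriv (deriv f) t) t :=
    (hf₂.differentiableAt_deriv hIopen ht).hasDerivAt
  have hspeed_sq : HasDerivAt (fun u => ‖deriv α u‖ ^ 2 + deriv f u ^ 2)
      (2 * (⟪deriv α t, deriv (deriv α) t⟫ + deriv f t * deriv (deriv f) t)) t :=
    (hα''.norm_sq.add (hf''.pow 2)).congr_deriv (by ring)
  have hnorm_sq_half : HasDerivAt (fun u => ‖deriv α u‖ ^ 2 / 2)
      ⟪deriv α t, deriv (deriv α) t⟫ t :=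
    (hα''.norm_sq.div_const 2).congr_deriv (by ring)
  have hK₃ : ‖deriv α t‖ ^ 3 * K t = ⟪deriv (deriv α) t, Jc (deriv α t)⟫ := by
    rw [hK t ht, mul_div_cancel₀ _ (pow_ne_zero 3 (norm_ne_zero_iff.mpr (hreg t ht)))]
  have hK₆ : ‖deriv α t‖ ^ 6 * K t ^ 2 = ⟪deriv (deriv α) t, Jc (deriv α t)⟫ ^ 2 := by
    rw [← hK₃]; ring
  subst hT hB hN hβ hftilde
  rw [deriv_emb_add_smul_e₃ hα' hf', deriv_deriv_emb_add_smul_e₃ hIopen hα₂ hf₂ ht, add_assoc,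
    smul_frenet_normal_add_smul_binormal,
    norm_cross3_emb_add_smul_e₃, cross3_emb_add_smul_e₃, inner_emb_add_smul_e₃,
    inner_emb_add_smul_e₃, real_inner_self_eq_norm_sq, norm_emb_add_smul_e₃, hspeed_sq.deriv,
    hnorm_sq_half.deriv, hK₆, mul_assoc _ _ (K t), hK₃]
  simp only [← embL_apply, map_add, map_sub, map_smul, map_neg]
  module

/-- The focal curve `C_γ = γ + c₁N + c₂B` of the cylindrical curve
`γ(t) = (α₁(t), α₂(t), f(t))` decomposes as `C_γ(t) = ι(β(t)) + f̃(t)·e₃`, where `β` is the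
generalized focal curve of `α` and `f̃` the corresponding height function, both given by
explicit formulas in terms of `α`, `f`, the signed curvature `K` of `α`, the focal curvatures
`c₁, c₂` and `ṡ = ‖α'‖`. -/
theorem focal_curve_of_cylindrical_curve
    (I : Set ℝ) (hIopen : IsOpen I) (hIconn : I.OrdConnected)
    (α : ℝ → E2) (f : ℝ → ℝ) (γ : ℝ → E3) (K : ℝ → ℝ) (κ : ℝ → ℝ) (τ : ℝ → ℝ)
    (hα : ContDiffOn ℝ 3 α I) (hreg : ∀ t ∈ I, deriv α t ≠ 0)
    (hK : ∀ t ∈ I, K t = ⟪deriv (deriv α) t, Jc (deriv α t)⟫ / ‖deriv α t‖ ^ 3)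
    (hK0 : ∀ t ∈ I, K t ≠ 0)
    (hf : ContDiffOn ℝ 3 f I)
    (hγ : ∀ t, γ t = mk3 (α t 0) (α t 1) (f t))
    (hκ : ∀ u, κ u = ‖cross3 (deriv γ u) (deriv (deriv γ) u)‖ / ‖deriv γ u‖ ^ 3)
    (hτ : ∀ u, τ u =
      ⟪cross3 (deriv γ u) (deriv (deriv γ) u), deriv (deriv (deriv γ)) u⟫ /
        ‖cross3 (deriv γ u) (deriv (deriv γ) u)‖ ^ 2)
    (t : ℝ) (ht : t ∈ I) (hκ0 : κ t ≠ 0) (hτ0 : τ t ≠ 0)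
    (T B N : E3) (c₁ c₂ : ℝ)
    (hT : T = ‖deriv γ t‖⁻¹ • deriv γ t)
    (hB : B = ‖cross3 (deriv γ t) (deriv (deriv γ) t)‖⁻¹ •
      cross3 (deriv γ t) (deriv (deriv γ) t))
    (hN : N = cross3 B T)
    (hc₁ : c₁ = (κ t)⁻¹)
    (hc₂ : c₂ = -deriv κ t / (‖deriv γ t‖ * κ t ^ 2 * τ t))
    (β : E2) (ftilde : ℝ)
    (hβ : β = α t +
      (Real.sqrt (‖deriv α t‖ ^ 2 + deriv f t ^ 2) *
          Real.sqrt (‖deriv α t‖ ^ 6 * K t ^ 2 +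
            ‖deriv (deriv f) t • deriv α t - deriv f t • deriv (deriv α) t‖ ^ 2))⁻¹ •
        (c₁ • ((‖deriv α t‖ ^ 2 + deriv f t ^ 2) • deriv (deriv α) t -
            (1 / 2 * deriv (fun u => ‖deriv α u‖ ^ 2 + deriv f u ^ 2) t) • deriv α t) -
          (c₂ * Real.sqrt (‖deriv α t‖ ^ 2 + deriv f t ^ 2)) •
            Jc (deriv (deriv f) t • deriv α t - deriv f t • deriv (deriv α) t)))
    (hftilde : ftilde = f t +
      (c₁ * (deriv (deriv f) t * ‖deriv α t‖ ^ 2 -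
          deriv f t * deriv (fun u => ‖deriv α u‖ ^ 2 / 2) t) +
        c₂ * Real.sqrt (‖deriv α t‖ ^ 2 + deriv f t ^ 2) * ‖deriv α t‖ ^ 3 * K t) /
      (Real.sqrt (‖deriv α t‖ ^ 2 + deriv f t ^ 2) *
        Real.sqrt (‖deriv α t‖ ^ 6 * K t ^ 2 +
          ‖deriv (deriv f) t • deriv α t - deriv f t • deriv (deriv α) t‖ ^ 2))) :
    γ t + c₁ • N + c₂ • B = emb β + ftilde • e₃ :=
  focal_curve_of_cylindrical_curve_general I hIopen α f γ K hα hreg hK hf hγ t ht T B N c₁ c₂ hT hB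
    hN β ftilde hβ hftilde
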